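/- Suppose C is strongly primary decomposable, i.e. (strong existence) for every k ∈ K one can write π(k) = d + c_1 + … + c_n with d ∈ Δ and c_i ∈ C_{λ_i}, where each λ_i is an irreducible divisor of Δ_k, and (uniqueness) whenever c_1 + … + c_n ∈ Δ with c_i ∈ C_{λ_i} for pairwise non-*-associate irreducibles λ_i, each c_i ∈ Δ. Then C is left primary decomposable and right primary decomposable; in particular, every c ∈ C lying in C^λ for every irreducible λ of R lies in Δ. -/

import Mathlib

open Classical in
/-- `S(λ)`: `λ` itself if `λ` is an associate of its involutive image `λ*`,
and `λ · λ*` otherwise. -/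
noncomputable def Sdual {R : Type*} [CommRing R] (σ : R →+* R) (l : R) : R :=
  if Associated l (σ l) then l else l * σ l

/-- `λ` and `μ` are `*`-associates: `λ` is an associate of `μ` or of `μ* = σ μ`. -/
def StarAssoc {R : Type*} [CommRing R] (σ : R →+* R) (l m : R) : Prop :=
  Associated l m ∨ Associated l (σ m)

/-- The subset `Δ ⊆ C` of classes of elements whose `χ`-value is a unit. -/
def DeltaSet {K C R : Type*} [AddCommMonoid K] [AddCommGroup C] [CommRing R]
    (π : K →+ C) (χ : K → R) : Set C :=
  {c | ∃ k, π k = c ∧ IsUnit (χ k)}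

/-- The `λ`-primary part `C_λ ⊆ C`: classes of elements whose `χ`-value is an
associate of a power of `S(λ)`. -/
def Cprim {K C R : Type*} [AddCommMonoid K] [AddCommGroup C] [CommRing R]
    (σ : R →+* R) (π : K →+ C) (χ : K → R) (l : R) : Set C :=
  {c | ∃ k, π k = c ∧ ∃ n : ℕ, Associated (χ k) (Sdual σ l ^ n)}

/-- The coprimary part `C^λ ⊆ C`: classes of elements whose `χ`-value is not
divisible by `λ`. -/
def Cco {K C R : Type*} [AddCommMonoid K] [AddCommGroup C] [CommRing R]
    (π : K →+ C) (χ : K → R) (l : R) : Set C :=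
  {c | ∃ k, π k = c ∧ ¬ l ∣ χ k}

/-!
Under (Δ1)–(Δ3), `Δ` and every `C_λ` are subgroups of `C`, `C^λ` is a submonoid for
irreducible `λ`, and `C_λ ⊆ C^μ` when `λ, μ` are not `*`-associate. Grouping the summands of a
decomposition by `*`-association class and applying uniqueness to the class sums shows: if
`∑ c_i ∈ Δ`, then the sum of the `c_i` along each class lies in `Δ`.

If `c ∈ C^λ` for all `λ`, write `c = d + ∑ c_i` by strong existence. For each `i`, `c` also has a
strong decomposition along the divisors of some `Δ_k'` with `λ_i ∤ Δ_k'`, hence (by (Δ1)) along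
irreducibles not `*`-associate to `λ_i`. The difference of the two decompositions lies in `Δ`, so
the `λ_i`-class sum of the first one lies in `Δ`; summing over the classes gives `c ∈ Δ`.
For the second half of right decomposability, `d` is the `λ`-class sum of a decomposition of `c`.
-/

open Finset

namespace StarAssoc

variable {R : Type*} [CommRing R] {σ : R →+* R} {l m p : R}

theorem refl (l : R) : StarAssoc σ l l := Or.inl (Associated.refl l)

theorem symm (hσ : Function.Involutive σ) (h : StarAssoc σ l m) : StarAssoc σ m l := by
  rcases h with h | h
  · exact Or.inl h.symm
  · exact Or.inr (by simpa only [hσ m] using (h.map σ).symm)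

theorem trans (hσ : Function.Involutive σ) (h₁ : StarAssoc σ l m) (h₂ : StarAssoc σ m p) :
    StarAssoc σ l p := by
  rcases h₁ with h₁ | h₁ <;> rcases h₂ with h₂ | h₂
  · exact Or.inl (h₁.trans h₂)
  · exact Or.inr (h₁.trans h₂)
  · exact Or.inr (h₁.trans (h₂.map σ))
  · exact Or.inl (by simpa only [hσ p] using h₁.trans (h₂.map σ))

theorem sdual_associated (hσ : Function.Involutive σ) (h : StarAssoc σ l m) :
    Associated (Sdual σ l) (Sdual σ m) := by
  have of_associated {a b : R} (hab : Associated a b) : Associated (Sdual σ a) (Sdual σ b) := by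
    have hcond : Associated a (σ a) ↔ Associated b (σ b) :=
      ⟨fun ha => hab.symm.trans (ha.trans (hab.map σ)),
        fun hb => hab.trans (hb.trans (hab.map σ).symm)⟩
    unfold Sdual
    split_ifs <;> first | exact hab | exact hab.mul_mul (hab.map σ) | tauto
  have sdual_map (a : R) : Associated (Sdual σ (σ a)) (Sdual σ a) := by
    unfold Sdual
    rw [hσ a]
    split_ifs with h₁ h₂ h₂
    · exact h₁
    · exact absurd h₁.symm h₂
    · exact absurd h₂.symm h₁
    · rw [mul_comm]
  rcases h with h | h
  · exact of_associated h
  · exact (of_associated h).trans (sdual_map m)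

theorem dvd (hσ : Function.Involutive σ) {x : R} (hx : Associated (σ x) x)
    (h : StarAssoc σ l m) (hl : l ∣ x) : m ∣ x := by
  rcases h with h | h
  · exact h.symm.dvd.trans hl
  · simpa only [hσ m] using (map_dvd σ (h.symm.dvd.trans hl)).trans hx.dvd

end StarAssoc

def starAssocSetoid {R : Type*} [CommRing R] {σ : R →+* R} (hσ : Function.Involutive σ) :
    Setoid R :=
  ⟨StarAssoc σ, ⟨StarAssoc.refl, StarAssoc.symm hσ, StarAssoc.trans hσ⟩⟩

section Irreducible

variable {R : Type*} [CommRing R] [IsDomain R] [UniqueFactorizationMonoid R]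
  {σ : R →+* R} {l μ : R}

theorem Irreducible.starAssoc_of_dvd_sdual (hσ : Function.Involutive σ) (hl : Irreducible l)
    (hμ : Irreducible μ) (h : μ ∣ Sdual σ l) : StarAssoc σ l μ := by
  have hσl : Irreducible (σ l) := hl.map (RingEquiv.ofBijective σ hσ.bijective)
  unfold Sdual at h
  split_ifs at h
  · exact Or.inl (hμ.associated_of_dvd hl h).symm
  · rcases (UniqueFactorizationMonoid.irreducible_iff_prime.mp hμ).dvd_or_dvd h with h | h
    · exact Or.inl (hμ.associated_of_dvd hl h).symm
    · exact Or.inr (by simpa only [hσ l] using ((hμ.associated_of_dvd hσl h).map σ).symm)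

end Irreducible

section Subgroups

variable {K C R : Type*} [AddCommMonoid K] [AddCommGroup C] [CommRing R]
  {π : K →+ C} {σ : R →+* R} {χ : K → R}

theorem isUnit_apply_zero [IsDomain R] (h0 : χ 0 ≠ 0)
    (hD2 : ∀ k k', Associated (χ (k + k')) (χ k * χ k')) : IsUnit (χ 0) := by
  obtain ⟨u, hu⟩ := hD2 0 0
  rw [add_zero] at hu
  exact mul_left_cancel₀ h0 hu ▸ u.isUnit

theorem zero_mem_deltaSet [IsDomain R] (h0 : χ 0 ≠ 0)
    (hD2 : ∀ k k', Associated (χ (k + k')) (χ k * χ k')) : (0 : C) ∈ DeltaSet π χ :=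
  ⟨0, map_zero π, isUnit_apply_zero h0 hD2⟩

theorem deltaSet_subset_cprim (l : R) : DeltaSet π χ ⊆ Cprim σ π χ l :=
  fun _ ⟨k, hk, hu⟩ => ⟨k, hk, 0, by rwa [pow_zero, associated_one_iff_isUnit]⟩

theorem deltaSet_subset_cco {l : R} (hl : ¬IsUnit l) : DeltaSet π χ ⊆ Cco π χ l :=
  fun _ ⟨k, hk, hu⟩ => ⟨k, hk, fun hdvd => hl (isUnit_of_dvd_unit hdvd hu)⟩

theorem cprim_subset_of_starAssoc (hσ : Function.Involutive σ) {l m : R}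
    (h : StarAssoc σ l m) : Cprim σ π χ l ⊆ Cprim σ π χ m :=
  fun _ ⟨k, hk, n, ha⟩ => ⟨k, hk, n, ha.trans ((h.sdual_associated hσ).pow_pow)⟩

theorem cprim_subset_cco [IsDomain R] [UniqueFactorizationMonoid R]
    (hσ : Function.Involutive σ) {l μ : R} (hl : Irreducible l) (hμ : Irreducible μ)
    (hne : ¬StarAssoc σ l μ) : Cprim σ π χ l ⊆ Cco π χ μ :=
  fun _ ⟨k, hk, _, ha⟩ => ⟨k, hk, fun hdvd => hne <| hl.starAssoc_of_dvd_sdual hσ hμ <|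
    (UniqueFactorizationMonoid.irreducible_iff_prime.mp hμ).dvd_of_dvd_pow (hdvd.trans ha.dvd)⟩

variable [IsDomain R] (h0 : χ 0 ≠ 0) (hD2 : ∀ k k', Associated (χ (k + k')) (χ k * χ k'))

def ccoAddSubmonoid {l : R} (hl : Prime l) : AddSubmonoid C where
  carrier := Cco π χ l
  zero_mem' := deltaSet_subset_cco hl.not_isUnit (zero_mem_deltaSet h0 hD2)
  add_mem' := fun ⟨k, hk, hd⟩ ⟨k', hk', hd'⟩ => ⟨k + k', by rw [map_add, hk, hk'],
    fun hdvd => (hl.dvd_or_dvd (hdvd.trans (hD2 k k').dvd)).elim hd hd'⟩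

variable (hD3 : ∀ k, ∃ j, π j = -π k ∧ Associated (χ j) (χ k))

def deltaAddSubgroup : AddSubgroup C where
  carrier := DeltaSet π χ
  zero_mem' := zero_mem_deltaSet h0 hD2
  add_mem' := fun ⟨k, hk, hu⟩ ⟨k', hk', hu'⟩ =>
    ⟨k + k', by rw [map_add, hk, hk'], (hD2 k k').symm.isUnit (hu.mul hu')⟩
  neg_mem' := fun ⟨k, hk, hu⟩ => by
    obtain ⟨j, hj, ha⟩ := hD3 k
    exact ⟨j, by rw [hj, hk], ha.symm.isUnit hu⟩

def cprimAddSubgroup (l : R) : AddSubgroup C where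
  carrier := Cprim σ π χ l
  zero_mem' := deltaSet_subset_cprim l (zero_mem_deltaSet h0 hD2)
  add_mem' := fun ⟨k, hk, n, ha⟩ ⟨k', hk', n', ha'⟩ =>
    ⟨k + k', by rw [map_add, hk, hk'], n + n', by
      rw [pow_add]; exact (hD2 k k').trans (ha.mul_mul ha')⟩
  neg_mem' := fun ⟨k, hk, n, ha⟩ => by
    obtain ⟨j, hj, hja⟩ := hD3 k
    exact ⟨j, by rw [hj, hk], n, hja.trans ha⟩

end Subgroups

section ClassSum

variable {ι κ C R : Type*} [Fintype ι] [Fintype κ] [AddCommGroup C] [CommRing R]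
  {σ : R →+* R}

open Classical

noncomputable def classSum (σ : R →+* R) (lam : ι → R) (cs : ι → C) (μ : R) : C :=
  ∑ t with StarAssoc σ (lam t) μ, cs t

abbrev classSetoid (hσ : Function.Involutive σ) (lam : ι → R) : Setoid ι :=
  (starAssocSetoid hσ).comap lam

theorem sum_eq_sum_classSum (hσ : Function.Involutive σ) (lam : ι → R) (cs : ι → C) :
    ∑ t, cs t = ∑ q : Quotient (classSetoid hσ lam), classSum σ lam cs (lam q.out) := by
  rw [← Finset.sum_fiberwise univ (Quotient.mk (classSetoid hσ lam)) cs]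
  refine Fintype.sum_congr _ _ fun q => ?_
  unfold classSum
  congr 1
  ext t
  conv_lhs => rw [← q.out_eq]
  simp only [mem_filter, mem_univ, true_and, Quotient.eq]
  rfl

theorem sum_eq_classSum_add (lam : ι → R) (cs : ι → C) (μ : R) :
    ∑ t, cs t = classSum σ lam cs μ + ∑ t with ¬StarAssoc σ (lam t) μ, cs t :=
  (sum_filter_add_sum_filter_not _ _ _).symm

theorem classSum_sumElim (lam : ι → R) (lam' : κ → R) (cs : ι → C) (cs' : κ → C) (μ : R) :
    classSum σ (Sum.elim lam lam') (Sum.elim cs cs') μ =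
      classSum σ lam cs μ + classSum σ lam' cs' μ := by
  simp only [classSum, sum_filter, Fintype.sum_sum_type, Sum.elim_inl, Sum.elim_inr]
  rfl

theorem classSum_congr (hσ : Function.Involutive σ) (lam : ι → R) (cs : ι → C) {μ ν : R}
    (h : StarAssoc σ μ ν) : classSum σ lam cs μ = classSum σ lam cs ν := by
  unfold classSum
  congr 1
  ext t
  simp only [mem_filter, mem_univ, true_and]
  exact ⟨fun ht => ht.trans hσ h, fun ht => ht.trans hσ (h.symm hσ)⟩

theorem classSum_eq_zero {lam : ι → R} {μ : R} (h : ∀ t, ¬StarAssoc σ (lam t) μ)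
    (cs : ι → C) : classSum σ lam cs μ = 0 :=
  sum_eq_zero fun t ht => absurd (mem_filter.mp ht).2 (h t)

end ClassSum

section PrimaryDecomposability

variable {K C R : Type*} [AddCommMonoid K] [AddCommGroup C] [CommRing R]
  {π : K →+ C} {σ : R →+* R} {χ : K → R}

def StrongPrimaryExistence (σ : R →+* R) (π : K →+ C) (χ : K → R) : Prop :=
  ∀ k : K, ∃ d ∈ DeltaSet π χ, ∃ n : ℕ, ∃ lam : Fin n → R, ∃ cs : Fin n → C,
    (∀ i, Irreducible (lam i) ∧ lam i ∣ χ k) ∧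
    (∀ i, cs i ∈ Cprim σ π χ (lam i)) ∧ π k = d + ∑ i, cs i

def PrimaryExistence (σ : R →+* R) (π : K →+ C) (χ : K → R) : Prop :=
  ∀ c : C, ∃ d ∈ DeltaSet π χ, ∃ n : ℕ, ∃ lam : Fin n → R, ∃ cs : Fin n → C,
    (∀ i, Irreducible (lam i)) ∧ (∀ i, cs i ∈ Cprim σ π χ (lam i)) ∧ c = d + ∑ i, cs i

def PrimaryUnique (σ : R →+* R) (π : K →+ C) (χ : K → R) : Prop :=
  ∀ (n : ℕ) (lam : Fin n → R) (cs : Fin n → C),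
    (∀ i, Irreducible (lam i)) →
    (∀ i j, i ≠ j → ¬ StarAssoc σ (lam i) (lam j)) →
    (∀ i, cs i ∈ Cprim σ π χ (lam i)) →
    (∑ i, cs i) ∈ DeltaSet π χ → ∀ i, cs i ∈ DeltaSet π χ

theorem StrongPrimaryExistence.primaryExistence (hπ : Function.Surjective π)
    (hSE : StrongPrimaryExistence σ π χ) : PrimaryExistence σ π χ := by
  intro c
  obtain ⟨k, rfl⟩ := hπ c
  obtain ⟨d, hd, n, lam, cs, hlam, hcs, hk⟩ := hSE k
  exact ⟨d, hd, n, lam, cs, fun i => (hlam i).1, hcs, hk⟩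

theorem PrimaryUnique.of_fintype (hU : PrimaryUnique σ π χ) {ι : Type*} [Fintype ι]
    {lam : ι → R} {cs : ι → C} (hirr : ∀ i, Irreducible (lam i))
    (hpair : Pairwise fun i j => ¬StarAssoc σ (lam i) (lam j))
    (hcs : ∀ i, cs i ∈ Cprim σ π χ (lam i)) (hsum : ∑ i, cs i ∈ DeltaSet π χ) (i : ι) :
    cs i ∈ DeltaSet π χ := by
  let e := Fintype.equivFin ι
  simpa only [Function.comp_apply, e.symm_apply_apply] using
    hU _ (lam ∘ e.symm) (cs ∘ e.symm) (fun _ => hirr _)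
      (fun _ _ hne => hpair (e.symm.injective.ne hne)) (fun _ => hcs _)
      (by rwa [← e.symm.sum_comp cs] at hsum) (e i)

theorem classSum_mem_cprim [IsDomain R] (hσ : Function.Involutive σ) (h0 : χ 0 ≠ 0)
    (hD2 : ∀ k k', Associated (χ (k + k')) (χ k * χ k'))
    (hD3 : ∀ k, ∃ j, π j = -π k ∧ Associated (χ j) (χ k))
    {ι : Type*} [Fintype ι] {lam : ι → R} {cs : ι → C}
    (hcs : ∀ t, cs t ∈ Cprim σ π χ (lam t)) (μ : R) :
    classSum σ lam cs μ ∈ Cprim σ π χ μ := by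
  classical
  exact (cprimAddSubgroup h0 hD2 hD3 μ).sum_mem fun t ht =>
    cprim_subset_of_starAssoc hσ (mem_filter.mp ht).2 (hcs t)

theorem PrimaryUnique.classSum_mem [IsDomain R] (hσ : Function.Involutive σ)
    (h0 : χ 0 ≠ 0) (hD2 : ∀ k k', Associated (χ (k + k')) (χ k * χ k'))
    (hD3 : ∀ k, ∃ j, π j = -π k ∧ Associated (χ j) (χ k)) (hU : PrimaryUnique σ π χ)
    {ι : Type*} [Fintype ι] {lam : ι → R} {cs : ι → C} (hirr : ∀ i, Irreducible (lam i))
    (hcs : ∀ t, cs t ∈ Cprim σ π χ (lam t)) (hsum : ∑ t, cs t ∈ DeltaSet π χ) (i : ι) :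
    classSum σ lam cs (lam i) ∈ DeltaSet π χ := by
  classical
  let s := classSetoid hσ lam
  have hpair : Pairwise fun q q' : Quotient s => ¬StarAssoc σ (lam q.out) (lam q'.out) :=
    fun q q' hne h => hne (q.out_eq.symm.trans ((Quotient.sound h).trans q'.out_eq))
  have hrep := hU.of_fintype (lam := fun q : Quotient s => lam q.out)
    (cs := fun q => classSum σ lam cs (lam q.out)) (fun _ => hirr _) hpair
    (fun _ => classSum_mem_cprim hσ h0 hD2 hD3 hcs _) (sum_eq_sum_classSum hσ lam cs ▸ hsum)
    (Quotient.mk s i)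
  rwa [classSum_congr hσ lam cs (Quotient.mk_out (s := s) i)] at hrep

end PrimaryDecomposability

section RightDecomposability

variable {K C R : Type*} [AddCommMonoid K] [AddCommGroup C]
  [CommRing R] [IsDomain R] {π : K →+ C} {σ : R →+* R} {χ : K → R}

open Classical in
theorem PrimaryExistence.exists_sub_mem_cco [UniqueFactorizationMonoid R]
    (hσ : Function.Involutive σ) (h0 : χ 0 ≠ 0)
    (hD2 : ∀ k k', Associated (χ (k + k')) (χ k * χ k'))
    (hD3 : ∀ k, ∃ j, π j = -π k ∧ Associated (χ j) (χ k)) (hE : PrimaryExistence σ π χ)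
    (c : C) {l : R} (hl : Irreducible l) :
    ∃ d : C, c - d ∈ Cco π χ l ∧
      ∀ μ : R, Irreducible μ → ¬StarAssoc σ l μ → d ∈ Cco π χ μ := by
  obtain ⟨d, hd, n, lam, cs, hlam, hcs, rfl⟩ := hE c
  refine ⟨classSum σ lam cs l, ?_, fun μ hμ hne =>
    cprim_subset_cco hσ hl hμ hne (classSum_mem_cprim hσ h0 hD2 hD3 hcs l)⟩
  rw [sum_eq_classSum_add lam cs l, add_left_comm, add_sub_cancel_left]
  have hlp := UniqueFactorizationMonoid.irreducible_iff_prime.mp hl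
  have hsum : ∑ t with ¬StarAssoc σ (lam t) l, cs t ∈ ccoAddSubmonoid h0 hD2 hlp :=
    sum_mem fun t ht => cprim_subset_cco hσ (hlam t) hl (mem_filter.mp ht).2 (hcs t)
  exact (ccoAddSubmonoid h0 hD2 hlp).add_mem (deltaSet_subset_cco hl.not_isUnit hd) hsum

theorem StrongPrimaryExistence.classSum_mem_deltaSet (hσ : Function.Involutive σ)
    (h0 : χ 0 ≠ 0) (hD1 : ∀ k, Associated (σ (χ k)) (χ k))
    (hD2 : ∀ k k', Associated (χ (k + k')) (χ k * χ k'))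
    (hD3 : ∀ k, ∃ j, π j = -π k ∧ Associated (χ j) (χ k))
    (hSE : StrongPrimaryExistence σ π χ) (hU : PrimaryUnique σ π χ)
    {k : K} {d : C} {n : ℕ} {lam : Fin n → R} {cs : Fin n → C}
    (hirr : ∀ i, Irreducible (lam i)) (hcs : ∀ i, cs i ∈ Cprim σ π χ (lam i))
    (hd : d ∈ DeltaSet π χ) (hk : π k = d + ∑ i, cs i) {i : Fin n}
    (hc : π k ∈ Cco π χ (lam i)) : classSum σ lam cs (lam i) ∈ DeltaSet π χ := by
  obtain ⟨k', hk', hndvd⟩ := hc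
  obtain ⟨d', hd', m, mu, cs', hmu, hcs', hk''⟩ := hSE k'
  have hfar (j : Fin m) : ¬StarAssoc σ (mu j) (lam i) :=
    fun h => hndvd (h.dvd hσ (hD1 k') (hmu j).2)
  have hsum : ∑ t, Sum.elim cs (-cs') t ∈ DeltaSet π χ := by
    have hdiff : ∑ t, Sum.elim cs (-cs') t = d' - d := by
      simp only [Fintype.sum_sum_type, Sum.elim_inl, Sum.elim_inr, Pi.neg_apply,
        sum_neg_distrib]
      rw [eq_sub_of_add_eq' hk.symm, eq_sub_of_add_eq' (hk''.symm.trans hk')]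
      abel
    exact hdiff ▸ (deltaAddSubgroup h0 hD2 hD3).sub_mem hd' hd
  have hmem := hU.classSum_mem hσ h0 hD2 hD3 (lam := Sum.elim lam mu)
    (cs := Sum.elim cs (-cs'))    (Sum.forall.mpr ⟨hirr, fun j => (hmu j).1⟩)
    (Sum.forall.mpr ⟨hcs, fun j => (cprimAddSubgroup h0 hD2 hD3 _).neg_mem (hcs' j)⟩)
    hsum (Sum.inl i)
  rwa [Sum.elim_inl, classSum_sumElim, classSum_eq_zero hfar, add_zero] at hmem

theorem StrongPrimaryExistence.mem_deltaSet_of_forall_mem_cco (hπ : Function.Surjective π)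
    (hσ : Function.Involutive σ) (h0 : χ 0 ≠ 0) (hD1 : ∀ k, Associated (σ (χ k)) (χ k))
    (hD2 : ∀ k k', Associated (χ (k + k')) (χ k * χ k'))
    (hD3 : ∀ k, ∃ j, π j = -π k ∧ Associated (χ j) (χ k))
    (hSE : StrongPrimaryExistence σ π χ) (hU : PrimaryUnique σ π χ) {c : C}
    (hc : ∀ l : R, Irreducible l → c ∈ Cco π χ l) : c ∈ DeltaSet π χ := by
  obtain ⟨k, rfl⟩ := hπ c
  obtain ⟨d, hd, n, lam, cs, hlam, hcs, hk⟩ := hSE k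
  have hirr (i : Fin n) : Irreducible (lam i) := (hlam i).1
  rw [hk, sum_eq_sum_classSum hσ lam cs]
  exact (deltaAddSubgroup h0 hD2 hD3).add_mem hd (sum_mem fun q _ =>
    hSE.classSum_mem_deltaSet hσ h0 hD1 hD2 hD3 hU hirr hcs hd hk (hc _ (hirr _)))

end RightDecomposability

/-- Strong primary decomposability implies left and right primary decomposability. -/
theorem statement4
    {K C R : Type*} [AddCommMonoid K] [AddCommGroup C]
    [CommRing R] [IsDomain R] [UniqueFactorizationMonoid R]
    (π : K →+ C) (hπ : Function.Surjective π)
    (σ : R →+* R) (hσ : ∀ r, σ (σ r) = r)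
    (χ : K → R) (hχ : ∀ k, χ k ≠ 0)
    (hD1 : ∀ k, Associated (σ (χ k)) (χ k))
    (hD2 : ∀ k k', Associated (χ (k + k')) (χ k * χ k'))
    (hD3 : ∀ k, ∃ j, π j = -π k ∧ Associated (χ j) (χ k))
    -- strong existence: a decomposition along irreducible divisors of `Δ_k`
    (hSE : ∀ k : K, ∃ d ∈ DeltaSet π χ, ∃ n : ℕ, ∃ lam : Fin n → R, ∃ cs : Fin n → C,
      (∀ i, Irreducible (lam i) ∧ lam i ∣ χ k) ∧
      (∀ i, cs i ∈ Cprim σ π χ (lam i)) ∧ π k = d + ∑ i, cs i)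
    -- uniqueness
    (hU : ∀ (n : ℕ) (lam : Fin n → R) (cs : Fin n → C),
      (∀ i, Irreducible (lam i)) →
      (∀ i j, i ≠ j → ¬ StarAssoc σ (lam i) (lam j)) →
      (∀ i, cs i ∈ Cprim σ π χ (lam i)) →
      (∑ i, cs i) ∈ DeltaSet π χ → ∀ i, cs i ∈ DeltaSet π χ) :
    -- left primary decomposability: existence
    (∀ c : C, ∃ d ∈ DeltaSet π χ, ∃ n : ℕ, ∃ lam : Fin n → R, ∃ cs : Fin n → C,
      (∀ i, Irreducible (lam i)) ∧ (∀ i, cs i ∈ Cprim σ π χ (lam i)) ∧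
      c = d + ∑ i, cs i) ∧
    -- left primary decomposability: uniqueness
    (∀ (n : ℕ) (lam : Fin n → R) (cs : Fin n → C),
      (∀ i, Irreducible (lam i)) →
      (∀ i j, i ≠ j → ¬ StarAssoc σ (lam i) (lam j)) →
      (∀ i, cs i ∈ Cprim σ π χ (lam i)) →
      (∑ i, cs i) ∈ DeltaSet π χ → ∀ i, cs i ∈ DeltaSet π χ) ∧
    -- right primary decomposability: injectivity of `Φ_R` (the "in particular" clause)
    (∀ c : C, (∀ l : R, Irreducible l → c ∈ Cco π χ l) → c ∈ DeltaSet π χ) ∧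
    -- right primary decomposability: surjectivity of `Φ_R`
    (∀ c : C, ∀ l : R, Irreducible l → ∃ d : C,
      c - d ∈ Cco π χ l ∧
      ∀ μ : R, Irreducible μ → ¬ StarAssoc σ l μ → d ∈ Cco π χ μ) := by
  have hE : PrimaryExistence σ π χ := StrongPrimaryExistence.primaryExistence hπ hSE
  exact ⟨hE, hU,
    fun c hc => StrongPrimaryExistence.mem_deltaSet_of_forall_mem_cco hπ hσ (hχ 0) hD1 hD2 hD3
      hSE hU hc,
    fun c l hl => hE.exists_sub_mem_cco hσ (hχ 0) hD2 hD3 c hl⟩
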